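/- arXiv:2604.01107 — 2 statements merged into one kernel-verified Lean document; each statement's English description precedes it below -/
import Mathlib

section
/- Let F be a free group and let φ, ψ be endomorphisms of F, neither of which is injective. Then the intersection of the kernels of φ and ψ is nontrivial. -/
/-!
Pick nontrivial `u ∈ ker φ` and `v ∈ ker ψ`. If they do not commute, their commutator is
nontrivial and lies in both (normal) kernels. If they commute, they generate an abelian
subgroup, which is free by Nielsen–Schreier, hence infinite cyclic; so `u` and `v` have a common
nontrivial power, which again lies in both kernels.
-/

open Subgroup
open scoped commutatorElement

namespace IsFreeGroup

variable {G : Type*} [Group G] [IsFreeGroup G]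

theorem not_commute_of_ne {a b : Generators G} (hab : a ≠ b) : ¬ Commute (of a) (of b) := by
  classical
  intro h
  -- `swap 0 1` and `swap 1 2` do not commute in `Perm (Fin 3)`.
  have := h.map (lift fun x => if x = a then Equiv.swap (0 : Fin 3) 1 else Equiv.swap 1 2)
  simp only [Commute, SemiconjBy, lift_of, if_neg hab.symm] at this
  exact absurd (congrFun (congrArg Equiv.toFun this) 0) (by decide)

theorem isCyclic [IsMulCommutative G] : IsCyclic G := by
  have : Subsingleton (Generators G) :=
    ⟨fun a b => by_contra fun hab => not_commute_of_ne hab (mul_comm' _ _)⟩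
  have : IsCyclic (FreeGroup (Generators G)) := by
    cases isEmpty_or_nonempty (Generators G)
    · infer_instance
    · have : Unique (Generators G) := uniqueOfSubsingleton (Classical.arbitrary _)
      infer_instance
  exact isCyclic_of_surjective (toFreeGroup G).symm (toFreeGroup G).symm.surjective

end IsFreeGroup

theorem IsCyclic.zpowers_inf_zpowers_ne_bot {G : Type*} [Group G] [IsCyclic G]
    [IsMulTorsionFree G] {u v : G} (hu : u ≠ 1) (hv : v ≠ 1) :
    zpowers u ⊓ zpowers v ≠ ⊥ := by
  obtain ⟨g, hg⟩ := IsCyclic.exists_generator (α := G)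
  obtain ⟨a, rfl⟩ := mem_zpowers_iff.mp (hg u)
  obtain ⟨b, rfl⟩ := mem_zpowers_iff.mp (hg v)
  have hb : b ≠ 0 := by rintro rfl; exact hv (zpow_zero g)
  refine ne_bot_iff_exists_ne_one.mpr ⟨⟨(g ^ a) ^ b, ?_, ?_⟩, ?_⟩
  · exact zpow_mem (mem_zpowers _) b
  · rw [← zpow_mul, mul_comm, zpow_mul]
    exact zpow_mem (mem_zpowers _) a
  · simpa [Subtype.ext_iff] using (IsMulTorsionFree.zpow_eq_one_iff_right hu).not.mpr hb

theorem FreeGroup.zpowers_inf_zpowers_ne_bot_of_commute {α : Type*} {u v : FreeGroup α}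
    (huv : Commute u v) (hu : u ≠ 1) (hv : v ≠ 1) : zpowers u ⊓ zpowers v ≠ ⊥ := by
  set H := closure {u, v}
  have : IsMulCommutative H := isMulCommutative_closure <| by
    rintro x (rfl | rfl) y (rfl | rfl) <;> first | rfl | exact huv.eq | exact huv.eq.symm
  -- `H` is free by the Nielsen–Schreier theorem (`subgroupIsFreeOfIsFree`).
  have : IsCyclic H := IsFreeGroup.isCyclic
  have hu' : (⟨u, subset_closure (by simp)⟩ : H) ≠ 1 := by simpa [Subtype.ext_iff] using hu
  have hv' : (⟨v, subset_closure (by simp)⟩ : H) ≠ 1 := by simpa [Subtype.ext_iff] using hv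
  have := IsCyclic.zpowers_inf_zpowers_ne_bot hu' hv'
  rwa [Ne, ← map_eq_bot_iff_of_injective _ H.subtype_injective,
    map_inf _ _ _ H.subtype_injective, MonoidHom.map_zpowers, MonoidHom.map_zpowers] at this

theorem kernels_intersect_nontrivial_general {α : Type*}
    (φ ψ : FreeGroup α →* FreeGroup α)
    (hφ : ¬ Function.Injective φ) (hψ : ¬ Function.Injective ψ) :
    φ.ker ⊓ ψ.ker ≠ ⊥ := by
  obtain ⟨⟨u, hu⟩, hu1⟩ := ne_bot_iff_exists_ne_one.mp (mt φ.ker_eq_bot_iff.mp hφ)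
  obtain ⟨⟨v, hv⟩, hv1⟩ := ne_bot_iff_exists_ne_one.mp (mt ψ.ker_eq_bot_iff.mp hψ)
  simp only [ne_eq, Subgroup.mk_eq_one] at hu1 hv1
  by_cases huv : Commute u v
  · exact ne_bot_of_le_ne_bot (FreeGroup.zpowers_inf_zpowers_ne_bot_of_commute huv hu1 hv1)
      (inf_le_inf (zpowers_le.mpr hu) (zpowers_le.mpr hv))
  · have hmem : ⁅u, v⁆ ∈ φ.ker ⊓ ψ.ker :=
      commutator_le_inf _ _ (commutator_mem_commutator hu hv)
    refine ne_bot_iff_exists_ne_one.mpr ⟨⟨⁅u, v⁆, hmem⟩, ?_⟩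
    simpa [Subtype.ext_iff, commutatorElement_eq_one_iff_commute] using huv

/-- If `φ` and `ψ` are endomorphisms of a nonabelian free group, neither of which is
injective, then `Ker(φ) ∩ Ker(ψ)` is nontrivial. -/
theorem kernels_intersect_nontrivial {α : Type*} [Nontrivial α]
    (φ ψ : FreeGroup α →* FreeGroup α)
    (hφ : ¬ Function.Injective φ) (hψ : ¬ Function.Injective ψ) :
    φ.ker ⊓ ψ.ker ≠ ⊥ :=
  kernels_intersect_nontrivial_general φ ψ hφ hψ
end

section
/- Let F be a free group with basis A, let B = A ∪ {$} with $ a new symbol, and let φ be an endomorphism of F. Fix u ∈ F and let Φ be the endomorphism of the free group F_B on B extending φ (via the inclusion F ↪ F_B) with Φ($) = u⁻¹·$. Then {v ∈ F | φ(v) = v·u} = {w·$⁻¹ | w ∈ Fix(Φ) ∩ F·$}; equivalently, for v ∈ F, φ(v) = v·u if and only if v·$ ∈ Fix(Φ). -/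
/-- The canonical embedding of `F_A` into `F_B` where `B = A ⊔ {$}`. -/
def incl (A : Type*) : FreeGroup A →* FreeGroup (A ⊕ Unit) :=
  FreeGroup.map Sum.inl

/-- The new symbol `$` of `F_B`. -/
def dollar (A : Type*) : FreeGroup (A ⊕ Unit) := FreeGroup.of (Sum.inr ())

/-- The extension `Φ` of `φ` to `F_B` with `Φ($) = u⁻¹·$`. -/
def bigPhi {A : Type*} (φ : FreeGroup A →* FreeGroup A) (u : FreeGroup A) :
    FreeGroup (A ⊕ Unit) →* FreeGroup (A ⊕ Unit) :=
  FreeGroup.lift (Sum.elim (fun a => incl A (φ (FreeGroup.of a)))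
    (fun _ => (incl A u)⁻¹ * dollar A))

lemma incl_injective (A : Type*) : Function.Injective (incl A) :=
  FreeGroup.map_injective Sum.inl_injective

section bigPhi

variable {A : Type*} (φ : FreeGroup A →* FreeGroup A) (u : FreeGroup A)

lemma bigPhi_comp_incl : (bigPhi φ u).comp (incl A) = (incl A).comp φ := by
  ext a
  simp [bigPhi, incl]

lemma bigPhi_incl (v : FreeGroup A) : bigPhi φ u (incl A v) = incl A (φ v) :=
  DFunLike.congr_fun (bigPhi_comp_incl φ u) v

lemma bigPhi_dollar : bigPhi φ u (dollar A) = (incl A u)⁻¹ * dollar A := by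
  simp [bigPhi, dollar]

lemma bigPhi_incl_mul_dollar (v : FreeGroup A) :
    bigPhi φ u (incl A v * dollar A) = incl A (φ v * u⁻¹) * dollar A := by
  rw [map_mul, bigPhi_incl, bigPhi_dollar, map_mul, map_inv, mul_assoc]

end bigPhi

/-- For `v ∈ F_A`, `φ(v) = v·u` if and only if `v·$` is a fixed point of `Φ`. -/
theorem twisted_fix_iff_dollar_fix {A : Type*}
    (φ : FreeGroup A →* FreeGroup A) (u : FreeGroup A) :
    ∀ v : FreeGroup A,
      φ v = v * u ↔
        bigPhi φ u (incl A v * dollar A) = incl A v * dollar A := by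
  intro v
  rw [bigPhi_incl_mul_dollar, mul_left_inj, (incl_injective A).eq_iff, mul_inv_eq_iff_eq_mul]
end
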